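/- arXiv:1608.05744 — 2 statements merged into one kernel-verified Lean document; each statement's English description precedes it below -/
import Mathlib

section
/- Let λ, v, u be positive integers and let M = m_1, m_2, …, m_t be a non-decreasing sequence of positive even integers. If there exists an (M)-cycle decomposition of λK_{v,u}, then all of the following hold: (a) m_t ≤ 2·min(v,u); (b) λv ≡ λu ≡ 0 (mod 2); (c) if λ is even, then t ≤ (λ/2)·v·u − m_t + 2; (d) if λ is odd, then 2·ν_2(M) ≤ (λ−1)·v·u. -/
namespace CycleDecompBipartite

variable {V : Type*} [Fintype V] [DecidableEq V]

/-- The multiset of edges of the path `f 0, f 1, …, f n`. -/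
def pathEdges {n : ℕ} (f : Fin (n + 1) → V) : Multiset (Sym2 V) :=
  ((List.finRange n).map fun i => s(f i.castSucc, f i.succ) : List (Sym2 V))

/-- `P` is the edge multiset of an `m`-path from `x` to `y`. -/
def IsPathFromTo (m : ℕ) (x y : V) (P : Multiset (Sym2 V)) : Prop :=
  ∃ f : Fin (m + 1) → V, Function.Injective f ∧ f 0 = x ∧ f (Fin.last m) = y ∧ P = pathEdges f

/-- `P` is the edge multiset of an `m`-path. -/
def IsPath (m : ℕ) (P : Multiset (Sym2 V)) : Prop :=
  ∃ x y : V, IsPathFromTo m x y P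

/-- The multiset of edges of the cycle `f 0, f 1, …, f (m-1)` (indices mod `m`).
For `m = 2` this gives two parallel edges. -/
def cycleEdges {m : ℕ} (f : Fin m → V) : Multiset (Sym2 V) :=
  ((List.finRange m).map fun i =>
      s(f i, f ⟨((i : ℕ) + 1) % m, Nat.mod_lt _ (Nat.lt_of_le_of_lt (Nat.zero_le _) i.isLt)⟩) :
    List (Sym2 V))

/-- `C` is the edge multiset of an `m`-cycle (with `m` distinct vertices); a `2`-cycle is a
pair of parallel edges. -/
def IsCycleM (m : ℕ) (C : Multiset (Sym2 V)) : Prop :=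
  2 ≤ m ∧ ∃ f : Fin m → V, Function.Injective f ∧ C = cycleEdges f

/-- The degree of `x` in the edge multiset `L` (number of edges incident with `x`,
counted with multiplicity; there are no loops in the graphs considered here). -/
def degM (L : Multiset (Sym2 V)) (x : V) : ℕ :=
  Multiset.countP (fun e => x ∈ e) L

/-- The set of vertices covered by the edge multiset `C`. -/
def vertsOf (C : Multiset (Sym2 V)) : Set V :=
  {x | ∃ e ∈ C, x ∈ e}

/-- `F` is a 1-factor (perfect matching) on vertex set `V`. -/
def IsOneFactor (F : Multiset (Sym2 V)) : Prop :=
  ∀ x : V, degM F x = 1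

/-- An `(M)`-cycle packing (`G` even) or `(M)*`-cycle packing (`G` odd) of the multigraph with
edge multiset `E`, recorded by its 1-factor `F` (which is `0` when `G` is even), its list of
cycles `Cs` (of lengths given by `M`), and its leave `L`. -/
def IsStarPacking (E : Multiset (Sym2 V)) (M : List ℕ) (F : Multiset (Sym2 V))
    (Cs : List (Multiset (Sym2 V))) (L : Multiset (Sym2 V)) : Prop :=
  List.Forall₂ IsCycleM M Cs ∧ F + Cs.sum + L = E ∧
    (((∀ x : V, Even (degM E x)) ∧ F = 0) ∨ ((∀ x : V, Odd (degM E x)) ∧ IsOneFactor F))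

/-- The edge multiset of the multigraph `λ K_{v,u}`: `λ` parallel edges between every vertex of
`Fin v` and every vertex of `Fin u`. -/
def lamK (lam v u : ℕ) : Multiset (Sym2 (Fin v ⊕ Fin u)) :=
  lam • ((Finset.univ : Finset (Fin v × Fin u)).val.map fun p => s(Sum.inl p.1, Sum.inr p.2))

/-- The simple graph underlying an edge multiset. -/
def supportGraph (L : Multiset (Sym2 V)) : SimpleGraph V where
  Adj x y := x ≠ y ∧ s(x, y) ∈ L
  symm := by
    constructor
    intro x y h
    refine ⟨h.1.symm, ?_⟩
    rw [Sym2.eq_swap]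
    exact h.2
  loopless := by constructor; intro x h; exact h.1 rfl

/-- The number of non-trivial connected components (components containing an edge) of the
edge multiset `L`. -/
noncomputable def ntComps (L : Multiset (Sym2 V)) : ℕ :=
  {c : (supportGraph L).ConnectedComponent |
    ∃ x : V, (supportGraph L).connectedComponentMk x = c ∧ 0 < degM L x}.ncard

/-- `As` is a chain: a list of cycles such that consecutive cycles meet in exactly one vertex
and non-consecutive cycles are vertex-disjoint. -/
def IsChainList (As : List (Multiset (Sym2 V))) : Prop :=
  (∀ A ∈ As, ∃ m, IsCycleM m A) ∧
    ∀ i j : Fin As.length, i < j →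
      (vertsOf (As.get i) ∩ vertsOf (As.get j)).ncard = if (j : ℕ) = (i : ℕ) + 1 then 1 else 0

/-- `As` is a ring of cycles. -/
def IsRingList (As : List (Multiset (Sym2 V))) : Prop :=
  (∀ A ∈ As, ∃ m, IsCycleM m A) ∧ 2 ≤ As.length ∧
    (3 ≤ As.length → ∀ i j : Fin As.length, i < j →
      (vertsOf (As.get i) ∩ vertsOf (As.get j)).ncard =
        if (j : ℕ) = (i : ℕ) + 1 ∨ ((i : ℕ) = 0 ∧ (j : ℕ) = As.length - 1) then 1 else 0) ∧
    (∀ h2 : As.length = 2,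
      (vertsOf (As.get ⟨0, by omega⟩) ∩ vertsOf (As.get ⟨1, by omega⟩)).ncard = 2)

/-- `L'` is obtained from `L` by an `(α,β)`-switch with origin `a` and terminus `b`:
`L'` differs from `L` only in that each of the edges `αa`, `αb`, `βa`, `βb` is an edge of `L'`
if and only if it is not an edge of `L`. -/
def SwitchResult (L L' : Multiset (Sym2 V)) (α β a b : V) : Prop :=
  (∀ e : Sym2 V, e ≠ s(α, a) → e ≠ s(α, b) → e ≠ s(β, a) → e ≠ s(β, b) →
      Multiset.count e L' = Multiset.count e L) ∧
    ∀ e : Sym2 V, (e = s(α, a) ∨ e = s(α, b) ∨ e = s(β, a) ∨ e = s(β, b)) → (e ∈ L' ↔ e ∉ L)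

/-- `a` is a cut vertex of the edge multiset `L`: removing `a` (i.e. all edges at `a`)
disconnects two vertices that were connected in `L`. -/
def IsCutVertex (L : Multiset (Sym2 V)) (a : V) : Prop :=
  ∃ y z : V, y ≠ a ∧ z ≠ a ∧ (supportGraph L).Reachable y z ∧
    ¬ (supportGraph (L.filter fun e => a ∉ e)).Reachable y z

end CycleDecompBipartite

/-!
Every edge of `λK_{v,u}` joins the two sides, so a cycle alternates between them and has as
many vertices on each side as half its length; this gives (a). A cycle has even degree at every
vertex, while the vertices of the two sides have degrees `λu` and `λv`; this gives (b). For (d),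
the 2-cycles together have even multiplicity on every edge, so for odd `λ` they use each edge at
most `λ - 1` times.

For (c), fix a cycle `C` of length `m`. As `λ` is even, every edge has even total multiplicity,
so modulo 2 the edge sets of the remaining cycles of length at least 3 add up to `C`. If a family
`F` of nonempty even edge sets adds up to `C` modulo 2, then `|C| + 2|F| ≤ ∑_{A ∈ F} |A| + 2`:
two members sharing an edge can be replaced by their symmetric difference (or deleted if equal),
which lowers the right side at least as much as the left; and a member sharing no edge with the
others lies inside `C`, hence is `C`, since no nonempty proper subset of the edges of a cycle is
even. Counting the 2-cycles back in, this is `t ≤ (λ/2)vu - m + 2`.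
-/

open Multiset Function

theorem Finset.card_symmDiff_add_two_mul_card_inter {α : Type*} [DecidableEq α]
    (A B : Finset α) : (symmDiff A B).card + 2 * (A ∩ B).card = A.card + B.card := by
  rw [symmDiff_def, Finset.sup_eq_union, Finset.card_union_of_disjoint disjoint_sdiff_sdiff]
  have := Finset.card_sdiff_add_card_inter A B
  have := Finset.card_sdiff_add_card_inter B A
  rw [Finset.inter_comm B A] at this
  omega

theorem Multiset.le_nsmul_pred_of_even_count {α : Type*} [DecidableEq α] {s t : Multiset α}
    {n : ℕ} (hn : Odd n) (ht : t.Nodup) (hs : s ≤ n • t) (heven : ∀ a, Even (count a s)) :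
    s ≤ (n - 1) • t := by
  rw [Multiset.le_iff_count] at hs ⊢
  intro a
  have := hs a
  obtain ⟨k, hk⟩ := heven a
  obtain ⟨r, rfl⟩ := hn
  rw [count_nsmul, count_eq_of_nodup ht] at this ⊢
  split_ifs at this ⊢ <;> omega

theorem odd_countP_mem_cons_cons_self {α : Type*} [DecidableEq α] (e : α) (A : Finset α)
    (F : Multiset (Finset α)) :
    Odd ((A ::ₘ A ::ₘ F).countP (e ∈ ·)) ↔ Odd (F.countP (e ∈ ·)) := by
  rw [countP_cons, countP_cons]
  split_ifs <;> simp [parity_simps]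

theorem odd_countP_mem_cons_cons_symmDiff {α : Type*} [DecidableEq α] (e : α)
    (A B : Finset α) (F : Multiset (Finset α)) :
    Odd ((A ::ₘ B ::ₘ F).countP (e ∈ ·)) ↔
      Odd ((symmDiff A B ::ₘ F).countP (e ∈ ·)) := by
  rw [countP_cons, countP_cons, countP_cons]
  by_cases heA : e ∈ A <;> by_cases heB : e ∈ B <;>
    simp [heA, heB, Finset.mem_symmDiff, parity_simps]

theorem Multiset.two_mul_card_le_sum_map {ι : Type*} {F : Multiset ι} {g : ι → ℕ}
    (h : ∀ A ∈ F, 2 ≤ g A) : 2 * card F ≤ (F.map g).sum := by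
  simpa [mul_comm] using card_nsmul_le_sum (s := F.map g) (a := 2) (by simpa using h)

theorem Multiset.sum_map_card_filter_card_eq_two {α : Type*} (D : Multiset (Multiset α)) :
    ((D.filter (card · = 2)).map card).sum = 2 * card (D.filter (card · = 2)) := by
  rw [map_congr rfl fun A hA => (mem_filter.1 hA).2, map_const', sum_replicate, smul_eq_mul,
    mul_comm]

theorem subset_of_forall_disjoint_of_odd_countP {α : Type*} [DecidableEq α] {A C : Finset α}
    {F : Multiset (Finset α)} (hdisj : ∀ B ∈ F, Disjoint A B)
    (hpar : ∀ e, e ∈ C ↔ Odd ((A ::ₘ F).countP (e ∈ ·))) : A ⊆ C := fun e he =>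
  (hpar e).2 <| by
    rw [countP_cons, countP_eq_zero.2 fun B hB heB => Finset.disjoint_left.1 (hdisj B hB) he heB]
    simp [he]

theorem card_add_two_mul_card_le_of_odd_countP {α : Type*} [DecidableEq α]
    {P : Finset α → Prop} (hP : ∀ A B, P A → P B → P (symmDiff A B))
    (hP1 : ∀ A, P A → A.card ≠ 1) {C : Finset α}
    (hC : ∀ A ⊆ C, P A → A.Nonempty → A = C) (F : Multiset (Finset α))
    (hF : ∀ A ∈ F, P A ∧ A.Nonempty) (hpar : ∀ e, e ∈ C ↔ Odd (F.countP (e ∈ ·))) :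
    C.card + 2 * card F ≤ (F.map Finset.card).sum + 2 := by
  induction hn : card F using Nat.strong_induction_on generalizing F with
  | _ n ih =>
  have two_le : ∀ A ∈ F, 2 ≤ A.card := fun A hA =>
    have := (hF A hA).2.card_pos; have := hP1 A (hF A hA).1; by omega
  rcases Multiset.empty_or_exists_mem F with rfl | ⟨A, hA⟩
  · have : C = ∅ := Finset.eq_empty_of_forall_notMem fun e he => by simpa using (hpar e).1 he
    simp [this, ← hn]
  obtain ⟨F₁, rfl⟩ := Multiset.exists_cons_of_mem hA
  by_cases hmeet : ∃ B ∈ F₁, ¬ Disjoint A B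
  · obtain ⟨B, hB, hAB⟩ := hmeet
    obtain ⟨F₂, rfl⟩ := Multiset.exists_cons_of_mem hB
    have hF₂ : ∀ X ∈ F₂, P X ∧ X.Nonempty := fun X hX => hF X (by simp [hX])
    have hA2 := two_le A (by simp)
    simp only [card_cons] at hn
    by_cases hAB' : A = B
    · subst hAB'
      have := ih (card F₂) (by omega) F₂ hF₂
        (fun e => (hpar e).trans (odd_countP_mem_cons_cons_self e A F₂)) rfl
      simp only [map_cons, sum_cons]
      omega
    · have hne : (symmDiff A B).Nonempty :=
        Finset.nonempty_iff_ne_empty.2 fun h => hAB' (symmDiff_eq_bot.1 h)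
      have hcard := Finset.card_symmDiff_add_two_mul_card_inter A B
      have hinter := (Finset.not_disjoint_iff_nonempty_inter.1 hAB).card_pos
      have := ih (card F₂ + 1) (by omega) (symmDiff A B ::ₘ F₂)
        (fun X hX => by
          rcases Multiset.mem_cons.1 hX with rfl | hX
          · exact ⟨hP A B (hF A (by simp)).1 (hF B (by simp)).1, hne⟩
          · exact hF₂ X hX)
        (fun e => (hpar e).trans (odd_countP_mem_cons_cons_symmDiff e A B F₂))
        (by simp)
      simp only [map_cons, sum_cons] at this ⊢
      omega
  · push Not at hmeet
    obtain rfl := hC A (subset_of_forall_disjoint_of_odd_countP hmeet hpar) (hF A hA).1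
      (hF A hA).2
    have := two_mul_card_le_sum_map fun X hX => two_le X (mem_cons_of_mem hX)
    simp only [card_cons, map_cons, sum_cons] at this hn ⊢
    omega

section Rotation
variable {m : ℕ}

theorem val_finRotate (i : Fin m) : (finRotate m i : ℕ) = ((i : ℕ) + 1) % m := by
  have := i.neZero
  rw [finRotate_apply, Fin.val_add, Fin.val_one', Nat.add_mod_mod]

theorem finRotate_ne_self (hm : 2 ≤ m) (i : Fin m) : finRotate m i ≠ i :=
  Equiv.Perm.mem_support.1 (by simp [support_finRotate_of_le hm])

theorem finRotate_finRotate_ne_self (hm : 3 ≤ m) (i : Fin m) :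
    finRotate m (finRotate m i) ≠ i := by
  intro h
  have := congrArg Fin.val h
  rw [val_finRotate, val_finRotate, Nat.mod_add_mod] at this
  have hi := i.isLt
  rcases Nat.lt_or_ge (i + 1 + 1) m with h1 | h1
  · rw [Nat.mod_eq_of_lt h1] at this; omega
  · rw [Nat.mod_eq_sub_mod h1, Nat.mod_eq_of_lt (by omega)] at this; omega

theorem finRotate_induction (hm : 2 ≤ m) {p : Fin m → Prop}
    (hstep : ∀ i, p i → p (finRotate m i)) {i : Fin m} (hi : p i) (j : Fin m) : p j := by
  obtain ⟨k, rfl⟩ := (isCycle_finRotate_of_le hm).exists_pow_eq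
    (finRotate_ne_self hm i) (finRotate_ne_self hm j)
  induction k with
  | zero => exact hi
  | succ k ih => rw [pow_succ', Equiv.Perm.mul_apply]; exact hstep _ ih

theorem sum_add_comp_finRotate (g : Fin m → ℕ) :
    ∑ i, (g i + g (finRotate m i)) = 2 * ∑ i, g i := by
  rw [Finset.sum_add_distrib, Equiv.sum_comp (finRotate m) g, two_mul]

end Rotation

theorem le_two_mul_card_of_isLeft_ne {α β : Type*} [Fintype α] {m : ℕ}
    {f : Fin m → α ⊕ β} (hf : Injective f)
    (halt : ∀ i, (f i).isLeft ≠ (f (finRotate m i)).isLeft) : m ≤ 2 * Fintype.card α := by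
  have hm : m = 2 * ∑ i, if (f i).isLeft then 1 else 0 := by
    rw [← sum_add_comp_finRotate]
    have : ∀ i, ((if (f i).isLeft then 1 else 0) +
        if (f (finRotate m i)).isLeft then 1 else 0) = 1 := by
      intro i
      have := halt i
      revert this
      cases (f i).isLeft <;> cases (f (finRotate m i)).isLeft <;> simp
    rw [Finset.sum_congr rfl fun i _ => this i]
    simp
  have hcard : (Finset.univ.filter fun i => (f i).isLeft).card ≤ Fintype.card α :=
    calc _ ≤ (Finset.univ.map .inl : Finset (α ⊕ β)).card :=
          Finset.card_le_card_of_injOn f (fun i hi => by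
            obtain ⟨a, ha⟩ := Sum.isLeft_iff.1 (Finset.mem_filter.1 hi).2
            simp [ha]) hf.injOn
      _ = Fintype.card α := by simp
  rw [Finset.card_filter] at hcard
  omega

theorem le_two_mul_min_card_of_isLeft_ne {α β : Type*} [Fintype α] [Fintype β] {m : ℕ}
    {f : Fin m → α ⊕ β} (hf : Injective f)
    (halt : ∀ i, (f i).isLeft ≠ (f (finRotate m i)).isLeft) :
    m ≤ 2 * min (Fintype.card α) (Fintype.card β) := by
  have := le_two_mul_card_of_isLeft_ne hf halt
  have := le_two_mul_card_of_isLeft_ne (f := Sum.swap ∘ f)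
    (Sum.swap_leftInverse.injective.comp hf) fun i => by simpa [← Sum.bnot_isLeft] using halt i
  omega

namespace CycleDecompBipartite

section CycleEdges
variable {V : Type*} {m : ℕ}

theorem cycleEdges_eq_map (f : Fin m → V) :
    cycleEdges f = (Finset.univ : Finset (Fin m)).val.map fun i => s(f i, f (finRotate m i)) := by
  have : ∀ i : Fin m, finRotate m i = ⟨((i : ℕ) + 1) % m, Nat.mod_lt _ i.pos⟩ :=
    fun i => Fin.ext (val_finRotate i)
  simp only [this]
  rfl

theorem card_cycleEdges (f : Fin m → V) : card (cycleEdges f) = m := by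
  simp [cycleEdges_eq_map]

theorem mem_cycleEdges {f : Fin m → V} {e : Sym2 V} :
    e ∈ cycleEdges f ↔ ∃ i, s(f i, f (finRotate m i)) = e := by
  simp [cycleEdges_eq_map]

theorem cycleEdges_two (f : Fin 2 → V) : cycleEdges f = replicate 2 s(f 0, f 1) := by
  rw [show cycleEdges f = {s(f 0, f 1), s(f 1, f 0)} from rfl, Sym2.eq_swap]
  rfl

theorem nodup_cycleEdges (hm : 3 ≤ m) {f : Fin m → V} (hf : Injective f) :
    (cycleEdges f).Nodup := by
  rw [cycleEdges_eq_map]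
  refine Nodup.map (fun i j h => ?_) Finset.univ.nodup
  rcases Sym2.eq_iff.1 h with ⟨h1, -⟩ | ⟨h1, h2⟩
  · exact hf h1
  · exact absurd (by rw [← hf h1, hf h2]) (finRotate_finRotate_ne_self hm j)

theorem even_degM_cycleEdges [DecidableEq V] (hm : 2 ≤ m) {f : Fin m → V} (hf : Injective f)
    (x : V) : Even (degM (cycleEdges f) x) := by
  have hsplit : ∀ i, (if x ∈ s(f i, f (finRotate m i)) then 1 else 0) =
      (if f i = x then 1 else 0) + (if f (finRotate m i) = x then 1 else 0) := by
    intro i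
    have hne := hf.ne (finRotate_ne_self hm i).symm
    by_cases h1 : f i = x <;> by_cases h2 : f (finRotate m i) = x <;> simp_all [eq_comm]
  rw [degM, cycleEdges_eq_map, countP_map, ← Finset.filter_val,
    Finset.card_val, Finset.card_filter, Finset.sum_congr rfl fun i _ => hsplit i,
    sum_add_comp_finRotate (fun i => if f i = x then 1 else 0)]
  exact even_two_mul _

end CycleEdges

section EvenDegree
variable {V : Type*} [DecidableEq V]

def EvenDegree (A : Finset (Sym2 V)) : Prop :=
  ∀ x, Even (degM A.val x)

theorem degM_val (A : Finset (Sym2 V)) (x : V) : degM A.val x = (A.filter (x ∈ ·)).card :=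
  countP_eq_card_filter _ _

theorem EvenDegree.symmDiff {A B : Finset (Sym2 V)} (hA : EvenDegree A) (hB : EvenDegree B) :
    EvenDegree (_root_.symmDiff A B) := by
  intro x
  have hfilter : (_root_.symmDiff A B).filter (x ∈ ·) =
      _root_.symmDiff (A.filter (x ∈ ·)) (B.filter (x ∈ ·)) := by
    ext e
    simp only [Finset.mem_filter, Finset.mem_symmDiff]
    tauto
  have := Finset.card_symmDiff_add_two_mul_card_inter (A.filter (x ∈ ·)) (B.filter (x ∈ ·))
  obtain ⟨a, ha⟩ := hA x
  obtain ⟨b, hb⟩ := hB x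
  rw [degM_val] at ha hb ⊢
  rw [hfilter]
  exact ⟨a + b - ((A.filter (x ∈ ·)) ∩ B.filter (x ∈ ·)).card, by omega⟩

theorem EvenDegree.card_ne_one {A : Finset (Sym2 V)} (hA : EvenDegree A) : A.card ≠ 1 := by
  intro h
  obtain ⟨e, rfl⟩ := Finset.card_eq_one.1 h
  induction e using Sym2.ind with
  | _ x y =>
    have := hA x
    rw [degM_val, Finset.filter_singleton, if_pos (Sym2.mem_mk_left x y),
      Finset.card_singleton] at this
    exact Nat.not_even_one this

end EvenDegree

section IsCycleM
variable {V : Type*} {m : ℕ} {C : Multiset (Sym2 V)}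

theorem IsCycleM.card_eq (h : IsCycleM m C) : card C = m := by
  obtain ⟨-, f, -, rfl⟩ := h
  exact card_cycleEdges f

theorem IsCycleM.nodup (h : IsCycleM m C) (hm : m ≠ 2) : C.Nodup := by
  obtain ⟨hm2, f, hf, rfl⟩ := h
  exact nodup_cycleEdges (by omega) hf

variable [DecidableEq V]

theorem IsCycleM.even_degM (h : IsCycleM m C) (x : V) : Even (degM C x) := by
  obtain ⟨hm, f, hf, rfl⟩ := h
  exact even_degM_cycleEdges hm hf x

theorem IsCycleM.even_count_of_two (h : IsCycleM 2 C) (e : Sym2 V) : Even (count e C) := by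
  obtain ⟨-, f, -, rfl⟩ := h
  rw [cycleEdges_two, count_replicate]
  split_ifs <;> simp

theorem IsCycleM.evenDegree_toFinset (h : IsCycleM m C) (hm : m ≠ 2) :
    EvenDegree C.toFinset := by
  intro x
  rw [toFinset_val, dedup_eq_self.2 (h.nodup hm)]
  exact h.even_degM x

theorem IsCycleM.eq_toFinset_of_subset (h : IsCycleM m C) {A : Finset (Sym2 V)}
    (hA : EvenDegree A) (hsub : A ⊆ C.toFinset) (hne : A.Nonempty) : A = C.toFinset := by
  obtain ⟨hm, f, hf, rfl⟩ := h
  have hstep : ∀ i, s(f i, f (finRotate m i)) ∈ A →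
      s(f (finRotate m i), f (finRotate m (finRotate m i))) ∈ A := by
    intro i hi
    by_contra hnot
    have hone : A.filter (f (finRotate m i) ∈ ·) = {s(f i, f (finRotate m i))} := by
      ext a
      simp only [Finset.mem_filter, Finset.mem_singleton]
      constructor
      · rintro ⟨ha, hxa⟩
        obtain ⟨j, rfl⟩ := mem_cycleEdges.1 (Multiset.mem_toFinset.1 (hsub ha))
        rcases Sym2.mem_iff.1 hxa with h | h
        · exact absurd (hf h ▸ ha) hnot
        · rw [(finRotate m).injective (hf h)]
      · rintro rfl
        exact ⟨hi, Sym2.mem_mk_right _ _⟩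
    have := hA (f (finRotate m i))
    rw [degM_val, hone] at this
    simp at this
  refine Finset.Subset.antisymm hsub fun a ha => ?_
  obtain ⟨b, hb⟩ := hne
  obtain ⟨i, rfl⟩ := mem_cycleEdges.1 (Multiset.mem_toFinset.1 (hsub hb))
  obtain ⟨j, rfl⟩ := mem_cycleEdges.1 (Multiset.mem_toFinset.1 ha)
  exact finRotate_induction hm hstep hb j

theorem count_sum_of_nodup {L : Multiset (Multiset (Sym2 V))} (hL : ∀ A ∈ L, A.Nodup)
    (e : Sym2 V) : count e L.sum = L.countP (e ∈ ·) := by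
  induction L using Multiset.induction_on with
  | empty => simp
  | cons A L ih =>
    rw [sum_cons, count_add, countP_cons, count_eq_of_nodup (hL A (mem_cons_self A L)),
      ih fun B hB => hL B (mem_cons_of_mem hB)]
    omega

theorem even_count_sum_filter_card_eq_two {D : Multiset (Multiset (Sym2 V))}
    (hD : ∀ A ∈ D, IsCycleM (card A) A) (e : Sym2 V) :
    Even (count e (D.filter (card · = 2)).sum) :=
  sum_induction (Even <| count e ·) _ (fun a b ha hb => by rw [count_add]; exact ha.add hb)
    (by simp) fun A hA =>
      ((mem_filter.1 hA).2 ▸ hD A (mem_of_mem_filter hA)).even_count_of_two e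

theorem mem_iff_odd_countP_toFinset (hC : C.Nodup) {D : Multiset (Multiset (Sym2 V))}
    (hD : ∀ A ∈ D, IsCycleM (card A) A) (hpar : ∀ e, Even (count e C + count e D.sum))
    (e : Sym2 V) :
    e ∈ C ↔ Odd (((D.filter (¬ card · = 2)).map toFinset).countP (e ∈ ·)) := by
  have hL : ∀ A ∈ D.filter (¬ card · = 2), A.Nodup := fun A hA =>
    (hD A (mem_of_mem_filter hA)).nodup (mem_filter.1 hA).2
  have := hpar e
  rw [← filter_add_not (card · = 2) D, sum_add, count_add, count_sum_of_nodup hL,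
    count_eq_of_nodup hC, Nat.even_add, Nat.even_add,
    iff_true_left (even_count_sum_filter_card_eq_two hD e)] at this
  rw [countP_map, ← countP_eq_card_filter]
  simp only [mem_toFinset]
  rw [← Nat.not_even_iff_odd, ← this]
  split_ifs <;> simp [*]

theorem IsCycleM.card_add_two_mul_card_le (hC : IsCycleM (card C) C)
    {D : Multiset (Multiset (Sym2 V))} (hD : ∀ A ∈ D, IsCycleM (card A) A)
    (hpar : ∀ e, Even (count e C + count e D.sum)) :
    card C + 2 * card D ≤ (D.map card).sum + 2 := by
  by_cases hC2 : card C = 2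
  · have := two_mul_card_le_sum_map fun A hA => (hD A hA).1
    omega
  set L := D.filter (¬ card · = 2)
  have hLnodup : ∀ A ∈ L, A.Nodup := fun A hA =>
    (hD A (mem_of_mem_filter hA)).nodup (mem_filter.1 hA).2
  have key := card_add_two_mul_card_le_of_odd_countP (P := EvenDegree)
    (fun _ _ => EvenDegree.symmDiff) (fun _ => EvenDegree.card_ne_one)
    (fun _ hsub hA hne => hC.eq_toFinset_of_subset hA hsub hne) (L.map toFinset)
    (by
      simp only [mem_map]
      rintro _ ⟨A, hA, rfl⟩
      have hAcyc := hD A (mem_of_mem_filter hA)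
      exact ⟨hAcyc.evenDegree_toFinset (mem_filter.1 hA).2,
        toFinset_nonempty.2 (card_pos.1 (by have := hAcyc.1; omega))⟩)
    fun e => by rw [mem_toFinset]; exact mem_iff_odd_countP_toFinset (hC.nodup hC2) hD hpar e
  rw [card_map, map_map, map_congr (f := Finset.card ∘ toFinset) rfl
    fun A hA => toFinset_card_of_nodup (hLnodup A hA),
    toFinset_card_of_nodup (hC.nodup hC2)] at key
  have hcard : card D = card (D.filter (card · = 2)) + card L := by
    rw [← card_add, filter_add_not]
  have hsum : (D.map card).sum = ((D.filter (card · = 2)).map card).sum + (L.map card).sum := by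
    rw [← sum_add, ← Multiset.map_add, filter_add_not]
  have := sum_map_card_filter_card_eq_two D
  omega

end IsCycleM

section CompleteBipartite
variable {lam v u : ℕ}

theorem lamK_eq_nsmul : lamK lam v u = lam • lamK 1 v u := by
  simp [lamK]

theorem nodup_lamK_one : (lamK 1 v u).Nodup := by
  rw [lamK, one_nsmul]
  refine Nodup.map (fun p q h => ?_) Finset.univ.nodup
  simpa [Sym2.eq_iff, Prod.ext_iff] using h

theorem card_lamK : card (lamK lam v u) = lam * v * u := by
  simp [lamK, mul_assoc]

theorem isLeft_ne_of_mem_lamK {x y : Fin v ⊕ Fin u} (h : s(x, y) ∈ lamK lam v u) :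
    x.isLeft ≠ y.isLeft := by
  obtain ⟨p, -, hp⟩ := Multiset.mem_map.1 (mem_of_mem_nsmul h)
  rcases Sym2.eq_iff.1 hp with ⟨rfl, rfl⟩ | ⟨rfl, rfl⟩ <;> simp

theorem degM_lamK_inl (a : Fin v) : degM (lamK lam v u) (.inl a) = lam * u := by
  rw [lamK_eq_nsmul, degM, countP_nsmul]
  simp only [lamK, one_nsmul, countP_map, Sym2.mem_iff, ← Finset.filter_val]
  rw [show (Finset.univ.filter fun p : Fin v × Fin u => _) = {a} ×ˢ Finset.univ by
    ext ⟨x, y⟩; simp [eq_comm]]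
  simp

theorem degM_lamK_inr (b : Fin u) : degM (lamK lam v u) (.inr b) = lam * v := by
  rw [lamK_eq_nsmul, degM, countP_nsmul]
  simp only [lamK, one_nsmul, countP_map, Sym2.mem_iff, ← Finset.filter_val]
  rw [show (Finset.univ.filter fun p : Fin v × Fin u => _) = Finset.univ ×ˢ {b} by
    ext ⟨x, y⟩; simp [eq_comm]]
  simp

theorem even_count_lamK (hlam : Even lam) (e : Sym2 (Fin v ⊕ Fin u)) :
    Even (count e (lamK lam v u)) := by
  rw [lamK_eq_nsmul, count_nsmul]
  exact hlam.mul_right _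

end CompleteBipartite

section Decomposition
variable {V : Type*}

def IsCycleDecomposition (E : Multiset (Sym2 V)) (D : Multiset (Multiset (Sym2 V))) : Prop :=
  (∀ C ∈ D, IsCycleM (card C) C) ∧ D.sum = E

theorem isCycleDecomposition_of_forall₂ {E : Multiset (Sym2 V)} {M : List ℕ}
    {Cs : List (Multiset (Sym2 V))} (h : List.Forall₂ IsCycleM M Cs) (hsum : Cs.sum = E) :
    M = Cs.map card ∧ IsCycleDecomposition E Cs := by
  refine ⟨?_, ?_, by rwa [sum_coe]⟩
  · rw [← List.forall₂_eq_eq_eq, List.forall₂_map_right_iff]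
    exact h.imp fun _ _ hC => hC.card_eq.symm
  · clear hsum
    induction h with
    | nil => simp
    | cons hC _ ih =>
      simp only [mem_coe, List.mem_cons] at ih ⊢
      rintro _ (rfl | hA)
      · rwa [hC.card_eq]
      · exact ih _ hA

theorem IsCycleDecomposition.even_degM [DecidableEq V] {E : Multiset (Sym2 V)}
    {D : Multiset (Multiset (Sym2 V))} (hD : IsCycleDecomposition E D) (x : V) :
    Even (degM E x) := by
  rw [← hD.2]
  exact sum_induction (fun C => Even (degM C x)) D
    (fun _ _ ha hb => by rw [degM, countP_add]; exact ha.add hb) (by simp [degM])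
    fun C hC => (hD.1 C hC).even_degM x

end Decomposition

namespace IsCycleDecomposition
variable {lam v u : ℕ} {D : Multiset (Multiset (Sym2 (Fin v ⊕ Fin u)))}

theorem card_le_two_mul_min (hD : IsCycleDecomposition (lamK lam v u) D)
    {C : Multiset (Sym2 (Fin v ⊕ Fin u))} (hC : C ∈ D) : card C ≤ 2 * min v u := by
  obtain ⟨-, f, hf, hCf⟩ := hD.1 C hC
  have hedge : ∀ i, s(f i, f (finRotate _ i)) ∈ lamK lam v u := fun i => by
    have hi := (mem_cycleEdges (f := f)).2 ⟨i, rfl⟩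
    rw [← hCf] at hi
    rw [← hD.2]
    exact mem_of_le (le_sum_of_mem hC) hi
  simpa using le_two_mul_min_card_of_isLeft_ne hf fun i => isLeft_ne_of_mem_lamK (hedge i)

theorem two_mul_card_add_two_mul_card_le (hD : IsCycleDecomposition (lamK lam v u) D)
    (hlam : Even lam) {C : Multiset (Sym2 (Fin v ⊕ Fin u))} (hC : C ∈ D) :
    2 * card D + 2 * card C ≤ lam * v * u + 4 := by
  obtain ⟨D₁, rfl⟩ := exists_cons_of_mem hC
  have key := (hD.1 C hC).card_add_two_mul_card_le (D := D₁)
    (fun A hA => hD.1 A (mem_cons_of_mem hA)) fun e => by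
      rw [← count_add, ← sum_cons, hD.2]
      exact even_count_lamK hlam e
  have htotal : card C + (D₁.map card).sum = lam * v * u := by
    rw [← card_lamK, ← hD.2, sum_cons, card_add, ← card_join]
    rfl
  rw [card_cons]
  omega

theorem two_mul_count_two_le (hD : IsCycleDecomposition (lamK lam v u) D) (hlam : Odd lam) :
    2 * count 2 (D.map card) ≤ (lam - 1) * v * u := by
  set S := D.filter (card · = 2)
  have hS : S.sum ≤ (lam - 1) • lamK 1 v u := by
    refine le_nsmul_pred_of_even_count hlam nodup_lamK_one ?_
      (even_count_sum_filter_card_eq_two hD.1)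
    rw [← lamK_eq_nsmul, ← hD.2, ← filter_add_not (card · = 2) D, sum_add]
    exact le_add_right _ _
  have := card_le_card hS
  rw [card_nsmul, card_lamK, show card S.sum = (S.map card).sum from card_join S,
    sum_map_card_filter_card_eq_two] at this
  rw [count_map, filter_congr fun _ _ => eq_comm]
  linarith

end IsCycleDecomposition

end CycleDecompBipartite

open CycleDecompBipartite in
theorem necessary_conditions_general (lam v u : ℕ) (hv : 0 < v) (hu : 0 < u)
    (M : List ℕ) (hne : M ≠ [])
    (hdec : ∃ Cs : List (Multiset (Sym2 (Fin v ⊕ Fin u))),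
      List.Forall₂ IsCycleM M Cs ∧ Cs.sum = lamK lam v u) :
    M.getLast hne ≤ 2 * min v u ∧
      (Even (lam * v) ∧ Even (lam * u)) ∧
      (Even lam → 2 * M.length + 2 * M.getLast hne ≤ lam * v * u + 4) ∧
      (Odd lam → 2 * M.count 2 ≤ (lam - 1) * v * u) := by
  obtain ⟨Cs, hMCs, hsum⟩ := hdec
  obtain ⟨rfl, hD⟩ := isCycleDecomposition_of_forall₂ hMCs hsum
  obtain ⟨C, hC, hlast⟩ := List.mem_map.1 (List.getLast_mem hne)
  replace hC : C ∈ (Cs : Multiset _) := Multiset.mem_coe.2 hC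
  rw [← hlast, List.length_map, ← Multiset.coe_card, ← Multiset.coe_count,
    ← Multiset.map_coe]
  refine ⟨hD.card_le_two_mul_min hC, ⟨?_, ?_⟩,
    fun hlam => hD.two_mul_card_add_two_mul_card_le hlam hC, hD.two_mul_count_two_le⟩
  · simpa [degM_lamK_inr] using hD.even_degM (.inr ⟨0, hu⟩)
  · simpa [degM_lamK_inl] using hD.even_degM (.inl ⟨0, hv⟩)

open CycleDecompBipartite in
/-- necessary conditions: if `λ K_{v,u}` has an `(M)`-cycle decomposition for a
non-decreasing sequence `M` of positive even integers, then (a) `m_t ≤ 2 min(v,u)`,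
(b) `λv ≡ λu ≡ 0 (mod 2)`, (c) if `λ` is even then `t ≤ (λ/2)vu - m_t + 2`
(stated as `2t + 2m_t ≤ λvu + 4`), and (d) if `λ` is odd then `2 ν₂(M) ≤ (λ-1)vu`. -/
theorem necessary_conditions (lam v u : ℕ) (hlam : 0 < lam) (hv : 0 < v) (hu : 0 < u)
    (M : List ℕ) (hne : M ≠ []) (hsorted : M.Pairwise (· ≤ ·))
    (hM : ∀ m ∈ M, 0 < m ∧ Even m)
    (hdec : ∃ Cs : List (Multiset (Sym2 (Fin v ⊕ Fin u))),
      List.Forall₂ IsCycleM M Cs ∧ Cs.sum = lamK lam v u) :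
    M.getLast hne ≤ 2 * min v u ∧
      (Even (lam * v) ∧ Even (lam * u)) ∧
      (Even lam → 2 * M.length + 2 * M.getLast hne ≤ lam * v * u + 4) ∧
      (Odd lam → 2 * M.count 2 ≤ (lam - 1) * v * u) :=
  necessary_conditions_general lam v u hv hu M hne hdec
end

section
/- Let λ be an even positive integer and let v, u be positive integers with λv ≡ λu ≡ 0 (mod 2). Let m_t be an even integer with 4 ≤ m_t ≤ 2·min(v,u), let k = (m_t − 2)/2, and suppose λvu ≥ m_t + 4k and λvu − m_t − 4k is even with r = (λvu − m_t − 4k)/2 ≥ 0. Then λK_{v,u} has a cycle decomposition into r cycles of length 2, k cycles of length 4, and one cycle of length m_t. -/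
/-
Write `a i`, `b j` for the vertices of the two parts. The `2(n+1)`-cycle `a₀ b₀ a₁ b₁ … aₙ bₙ`
together with the `n` four-cycles `a₀ bᵢ aᵢ₊₁ bᵢ₊₁` uses each of the `3n + 1` distinct edges
`aᵢ bᵢ`, `aᵢ₊₁ bᵢ`, `a₀ bᵢ₊₁` exactly twice and no other edge. For `λ = 2μ` the multigraph
`λK_{v,u}` is `μK_{v,u}` doubled, and `μK_{v,u}` contains those `3n + 1` edges once each;
every remaining edge of `μK_{v,u}`, doubled, is a 2-cycle.
-/

open Finset

theorem Finset.val_map_eq_sum_singleton {ι α : Type*} (s : Finset ι) (f : ι → α) :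
    s.val.map f = ∑ i ∈ s, {f i} := by
  rw [Finset.sum_eq_multiset_sum, ← Multiset.sum_map_singleton (s.val.map f), Multiset.map_map]
  rfl

theorem Nat.injOn_mod_Iic {v n : ℕ} (hn : n < v) : Set.InjOn (· % v) (Set.Iic n) :=
    fun i hi j hj h => by
  simp only [Set.mem_Iic] at hi hj
  simpa [Nat.mod_eq_of_lt (hi.trans_lt hn), Nat.mod_eq_of_lt (hj.trans_lt hn)] using h

namespace CycleDecompBipartite

variable {V : Type*}

lemma cycleEdges_eq_sum_range (g : ℕ → V) (m : ℕ) :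
    cycleEdges (fun i : Fin (m + 1) => g i) =
      ∑ i ∈ range m, {s(g i, g (i + 1))} + {s(g m, g 0)} := by
  have h : cycleEdges (fun i : Fin (m + 1) => g i) =
      ∑ i ∈ range (m + 1), {s(g i, g ((i + 1) % (m + 1)))} := by
    have hsingleton := Multiset.sum_map_singleton
      ((univ : Finset (Fin (m + 1))).val.map fun i : Fin (m + 1) => s(g i, g ((i + 1) % (m + 1))))
    rw [Multiset.map_map, Function.comp_def] at hsingleton
    rw [← Fin.sum_univ_eq_sum_range, Finset.sum_eq_multiset_sum, hsingleton, Fin.univ_val_map,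
      List.ofFn_eq_map]
    rfl
  rw [h, sum_range_succ, Nat.mod_self]
  congr 1
  refine sum_congr rfl fun i hi => ?_
  rw [Nat.mod_eq_of_lt (by simpa using hi)]

lemma cycleEdges_two_s10 (x y : V) : cycleEdges ![x, y] = 2 • {s(x, y)} := by
  change {s(x, y), s(y, x)} = _
  rw [Sym2.eq_swap (a := y), two_nsmul, Multiset.singleton_add]; rfl

lemma cycleEdges_four (w x y z : V) :
    cycleEdges ![w, x, y, z] = {s(w, x)} + {s(x, y)} + {s(y, z)} + {s(z, w)} := by
  simp only [Multiset.singleton_add]; rfl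

def zigzag (a b : ℕ → V) (i : ℕ) : V :=
  if i % 2 = 0 then a (i / 2) else b (i / 2)

@[simp]
lemma zigzag_two_mul (a b : ℕ → V) (i : ℕ) : zigzag a b (2 * i) = a i := by
  simp [zigzag]

@[simp]
lemma zigzag_two_mul_add_one (a b : ℕ → V) (i : ℕ) : zigzag a b (2 * i + 1) = b i := by
  simp [zigzag, Nat.add_mod, Nat.add_div]

lemma sum_range_zigzag (a b : ℕ → V) (n : ℕ) :
    ∑ i ∈ range (2 * n + 1), ({s(zigzag a b i, zigzag a b (i + 1))} : Multiset (Sym2 V)) =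
      ∑ i ∈ range (n + 1), {s(a i, b i)} + ∑ i ∈ range n, {s(a (i + 1), b i)} := by
  induction n with
  | zero => simp [zigzag]
  | succ n ih =>
    rw [show 2 * (n + 1) + 1 = 2 * n + 1 + 1 + 1 by ring, sum_range_succ, sum_range_succ, ih,
      sum_range_succ _ (n + 1), sum_range_succ (fun i => ({s(a (i + 1), b i)} : Multiset (Sym2 V))),
      show 2 * n + 1 + 1 = 2 * (n + 1) by ring,
      zigzag_two_mul, zigzag_two_mul_add_one, zigzag_two_mul_add_one, Sym2.eq_swap (a := b n)]
    abel

def zigzagCycle (a b : ℕ → V) (n : ℕ) : Multiset (Sym2 V) :=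
  cycleEdges fun i : Fin (2 * n + 2) => zigzag a b i

def fourCycle (a b : ℕ → V) (i : ℕ) : Multiset (Sym2 V) :=
  cycleEdges ![a 0, b i, a (i + 1), b (i + 1)]

/-- The index pairs `(i, j)` of the edges `a i b j` traversed twice by `zigzagCycle a b n` and the
`fourCycle a b i`, `i < n`. -/
def coveredPairs (n : ℕ) : Multiset (ℕ × ℕ) :=
  (range (n + 1)).val.map (fun i => (i, i)) + (range n).val.map (fun i => (i + 1, i)) +
    (range n).val.map (fun i => (0, i + 1))

lemma zigzagCycle_add_sum_fourCycle (a b : ℕ → V) (n : ℕ) :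
    zigzagCycle a b n + ∑ i ∈ range n, fourCycle a b i =
      2 • (coveredPairs n).map fun p => s(a p.1, b p.2) := by
  have hcycle : zigzagCycle a b n = ∑ i ∈ range (n + 1), {s(a i, b i)} +
      ∑ i ∈ range n, {s(a (i + 1), b i)} + {s(a 0, b n)} := by
    have h0 : zigzag a b 0 = a 0 := zigzag_two_mul a b 0
    rw [zigzagCycle, cycleEdges_eq_sum_range, sum_range_zigzag, h0, zigzag_two_mul_add_one,
      Sym2.eq_swap]
  have hfour : ∀ i, fourCycle a b i =
      {s(a 0, b i)} + {s(a (i + 1), b i)} + {s(a (i + 1), b (i + 1))} + {s(a 0, b (i + 1))} := by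
    intro i
    rw [fourCycle, cycleEdges_four, Sym2.eq_swap (a := b i), Sym2.eq_swap (a := b (i + 1))]
  have hdiag := sum_range_succ' (fun i => ({s(a i, b i)} : Multiset (Sym2 V))) n
  have hrow := sum_range_succ' (fun i => ({s(a 0, b i)} : Multiset (Sym2 V))) n
  rw [sum_range_succ] at hrow
  simp only [coveredPairs, Multiset.map_add, Multiset.map_map, Function.comp_def]
  simp only [Finset.val_map_eq_sum_singleton, hcycle, hfour, sum_add_distrib]
  calc _ = (∑ i ∈ range n, {s(a 0, b i)} + {s(a 0, b n)}) + ∑ i ∈ range (n + 1), {s(a i, b i)} +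
        ∑ i ∈ range n, ({s(a (i + 1), b i)} + {s(a (i + 1), b i)}) +
          ∑ i ∈ range n, {s(a (i + 1), b (i + 1))} + ∑ i ∈ range n, {s(a 0, b (i + 1))} := by
        simp only [sum_add_distrib]; abel
    _ = _ := by
        rw [hrow, hdiag]; simp only [sum_add_distrib]; abel

lemma coveredPairs_nodup (n : ℕ) : (coveredPairs n).Nodup := by
  have hmap : ∀ (f : ℕ → ℕ × ℕ) (k : ℕ), Function.Injective f → ((range k).val.map f).Nodup :=
    fun f k hf => (range k).nodup.map hf
  rw [coveredPairs, Multiset.nodup_add, Multiset.nodup_add]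
  refine ⟨⟨hmap _ _ fun i j h => by simpa using h, hmap _ _ fun i j h => by simpa using h, ?_⟩,
    hmap _ _ fun i j h => by simpa using h, ?_⟩ <;>
  refine Multiset.disjoint_left.mpr fun hp hq => ?_ <;>
  simp only [Multiset.mem_add, Multiset.mem_map, Finset.mem_val, mem_range] at hp hq <;>
  grind

lemma le_of_mem_coveredPairs {n : ℕ} {p : ℕ × ℕ} (hp : p ∈ coveredPairs n) : p.1 ≤ n ∧ p.2 ≤ n := by
  simp only [coveredPairs, Multiset.mem_add, Multiset.mem_map, Finset.mem_val, mem_range] at hp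
  rcases hp with (⟨i, hi, rfl⟩ | ⟨i, hi, rfl⟩) | ⟨i, hi, rfl⟩ <;> dsimp only <;> omega

lemma card_coveredPairs (n : ℕ) : Multiset.card (coveredPairs n) = 3 * n + 1 := by
  simp only [coveredPairs, Multiset.card_add, Multiset.card_map, card_val, card_range]
  ring

section

variable {a b : ℕ → V} {n : ℕ}

lemma nodup_map_coveredPairs (ha : Set.InjOn a (Set.Iic n)) (hb : Set.InjOn b (Set.Iic n))
    (hab : ∀ i j, a i ≠ b j) : ((coveredPairs n).map fun p => s(a p.1, b p.2)).Nodup := by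
  refine (coveredPairs_nodup n).map_on fun p hp q hq h => ?_
  obtain ⟨hp1, hp2⟩ := le_of_mem_coveredPairs hp
  obtain ⟨hq1, hq2⟩ := le_of_mem_coveredPairs hq
  rcases Sym2.eq_iff.mp h with ⟨h1, h2⟩ | ⟨h1, -⟩
  · exact Prod.ext (ha hp1 hq1 h1) (hb hp2 hq2 h2)
  · exact absurd h1 (hab _ _)

lemma isCycleM_zigzagCycle (ha : Set.InjOn a (Set.Iic n)) (hb : Set.InjOn b (Set.Iic n))
    (hab : ∀ i j, a i ≠ b j) : IsCycleM (2 * n + 2) (zigzagCycle a b n) := by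
  refine ⟨by omega, _, fun i j h => ?_, rfl⟩
  have hmem : ∀ k : Fin (2 * n + 2), (k : ℕ) / 2 ∈ Set.Iic n := fun k => by
    simp only [Set.mem_Iic]; omega
  simp only [zigzag] at h
  split_ifs at h
  · have := ha (hmem i) (hmem j) h; omega
  · exact absurd h (hab _ _)
  · exact absurd h.symm (hab _ _)
  · have := hb (hmem i) (hmem j) h; omega

lemma isCycleM_fourCycle (ha : Set.InjOn a (Set.Iic n)) (hb : Set.InjOn b (Set.Iic n))
    (hab : ∀ i j, a i ≠ b j) {i : ℕ} (hi : i < n) : IsCycleM 4 (fourCycle a b i) := by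
  refine ⟨by omega, _, ?_, rfl⟩
  have h0 : a 0 ≠ a (i + 1) := ha.ne (Set.mem_Iic.mpr (by omega)) (Set.mem_Iic.mpr hi) (by omega)
  have h1 : b i ≠ b (i + 1) :=
    hb.ne (Set.mem_Iic.mpr hi.le) (Set.mem_Iic.mpr hi) (by omega)
  simp only [Matrix.vecCons, Fin.cons_injective_iff]
  simp [h0, h1, hab, (hab _ _).symm, Function.Injective]

end

lemma exists_twoCycles_sum_eq_two_nsmul (W : Multiset (Sym2 V)) (hW : ∀ e ∈ W, ¬ e.IsDiag) :
    ∃ Cs : List (Multiset (Sym2 V)),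
      List.Forall₂ IsCycleM (List.replicate (Multiset.card W) 2) Cs ∧ Cs.sum = 2 • W := by
  induction W using Multiset.induction_on with
  | empty => exact ⟨[], .nil, by simp⟩
  | cons e W ih =>
    obtain ⟨Cs, hCs, hsum⟩ := ih fun e' he' => hW e' (Multiset.mem_cons_of_mem he')
    induction e using Sym2.ind with
    | h x y =>
      have hxy : x ≠ y := hW _ (Multiset.mem_cons_self _ _)
      refine ⟨cycleEdges ![x, y] :: Cs, ?_, ?_⟩
      · rw [Multiset.card_cons, List.replicate_succ]
        exact .cons ⟨le_rfl, _, injective_pair_iff_ne.mpr hxy, rfl⟩ hCs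
      · rw [List.sum_cons, hsum, cycleEdges_two_s10, ← smul_add, Multiset.singleton_add]

theorem exists_cycleDecomposition_two_nsmul {E : Multiset (Sym2 V)} (hE : ∀ e ∈ E, ¬ e.IsDiag)
    {a b : ℕ → V} {n : ℕ} (ha : Set.InjOn a (Set.Iic n)) (hb : Set.InjOn b (Set.Iic n))
    (hab : ∀ i j, a i ≠ b j) (hT : (coveredPairs n).map (fun p => s(a p.1, b p.2)) ≤ E) :
    ∃ Cs : List (Multiset (Sym2 V)),
      List.Forall₂ IsCycleM
        (List.replicate (Multiset.card E - (3 * n + 1)) 2 ++ List.replicate n 4 ++ [2 * n + 2]) Cs ∧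
      Cs.sum = 2 • E := by
  obtain ⟨W, rfl⟩ := Multiset.le_iff_exists_add.mp hT
  have hcard : Multiset.card (((coveredPairs n).map fun p => s(a p.1, b p.2)) + W) - (3 * n + 1) =
      Multiset.card W := by
    simp [card_coveredPairs]
  obtain ⟨Cs, hCs, hsum⟩ :=
    exists_twoCycles_sum_eq_two_nsmul W fun e he => hE e (Multiset.mem_add.mpr (.inr he))
  refine ⟨Cs ++ (List.range n).map (fourCycle a b) ++ [zigzagCycle a b n], ?_, ?_⟩
  · rw [hcard]
    refine List.rel_append (List.rel_append hCs ?_) (.cons (isCycleM_zigzagCycle ha hb hab) .nil)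
    rw [show List.replicate n 4 = (List.range n).map fun _ => 4 by simp, List.forall₂_map_left_iff,
      List.forall₂_map_right_iff, List.forall₂_same]
    exact fun i hi => isCycleM_fourCycle ha hb hab (List.mem_range.mp hi)
  · have hfour : ((List.range n).map (fourCycle a b)).sum = ∑ i ∈ range n, fourCycle a b i := by
      rw [Finset.sum_eq_multiset_sum, Finset.range_val, Multiset.range, Multiset.map_coe,
        Multiset.sum_coe]
    rw [List.sum_append, List.sum_append, List.sum_singleton, hsum, hfour, smul_add,
      ← zigzagCycle_add_sum_fourCycle]
    abel

theorem exists_cycleDecomposition_lamK {v u m n : ℕ} (hm : 0 < m) (hnv : n < v) (hnu : n < u) :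
    ∃ Cs : List (Multiset (Sym2 (Fin v ⊕ Fin u))),
      List.Forall₂ IsCycleM
        (List.replicate (m * v * u - (3 * n + 1)) 2 ++ List.replicate n 4 ++ [2 * n + 2]) Cs ∧
      Cs.sum = lamK (2 * m) v u := by
  set K := (univ : Finset (Fin v × Fin u)).val.map fun p => s(Sum.inl p.1, Sum.inr p.2)
  let a : ℕ → Fin v ⊕ Fin u := fun i => .inl ⟨i % v, Nat.mod_lt i (by omega)⟩
  let b : ℕ → Fin v ⊕ Fin u := fun j => .inr ⟨j % u, Nat.mod_lt j (by omega)⟩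
  have ha : Set.InjOn a (Set.Iic n) := fun i hi j hj h =>
    Nat.injOn_mod_Iic hnv hi hj (by simpa [a] using h)
  have hb : Set.InjOn b (Set.Iic n) := fun i hi j hj h =>
    Nat.injOn_mod_Iic hnu hi hj (by simpa [b] using h)
  have hab : ∀ i j, a i ≠ b j := fun _ _ => Sum.inl_ne_inr
  have hK : ∀ e ∈ m • K, ¬ e.IsDiag := fun e he => by
    obtain ⟨p, -, rfl⟩ := Multiset.mem_map.mp (Multiset.mem_of_mem_nsmul he)
    simp
  have hTK : (coveredPairs n).map (fun p => s(a p.1, b p.2)) ≤ K := by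
    refine (Multiset.le_iff_subset (nodup_map_coveredPairs ha hb hab)).mpr fun e he => ?_
    obtain ⟨p, -, rfl⟩ := Multiset.mem_map.mp he
    simp [K, a, b]
  have hcard : Multiset.card (m • K) = m * v * u := by
    simp [K, mul_assoc]
  obtain ⟨Cs, hCs, hsum⟩ := exists_cycleDecomposition_two_nsmul hK ha hb hab
    (hTK.trans (le_self_nsmul zero_le hm.ne'))
  rw [hcard] at hCs
  exact ⟨Cs, hCs, by rw [hsum, lamK, smul_smul]⟩

end CycleDecompBipartite

open CycleDecompBipartite in
theorem small_decomposition_even_general (lam v u : ℕ) (hlam : 0 < lam) (hle : Even lam)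
    (mt k r : ℕ) (hmt_even : Even mt) (hmt4 : 4 ≤ mt) (hmtb : mt ≤ 2 * min v u)
    (hk : k = (mt - 2) / 2)
    (hr : r = (lam * v * u - mt - 4 * k) / 2) :
    ∃ Cs : List (Multiset (Sym2 (Fin v ⊕ Fin u))),
      List.Forall₂ IsCycleM (List.replicate r 2 ++ List.replicate k 4 ++ [mt]) Cs ∧
      Cs.sum = lamK lam v u := by
  obtain ⟨m, rfl⟩ := even_iff_two_dvd.mp hle
  obtain ⟨n, rfl⟩ : ∃ n, mt = 2 * n + 2 := by
    obtain ⟨c, hc⟩ := hmt_even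
    exact ⟨c - 1, by omega⟩
  obtain rfl : n = k := by omega
  obtain rfl : r = m * v * u - (3 * n + 1) := by
    rw [hr, mul_assoc 2, mul_assoc 2]
    omega
  exact exists_cycleDecomposition_lamK (by omega) (by omega) (by omega)

open CycleDecompBipartite in
/-- small decompositions, `λ` even: for even `λ`, an even `m_t` with
`4 ≤ m_t ≤ 2 min(v,u)`, `k = (m_t - 2)/2`, and `r = (λvu - m_t - 4k)/2 ≥ 0` (with
`λvu - m_t - 4k` even), `λ K_{v,u}` decomposes into `r` 2-cycles, `k` 4-cycles and one
`m_t`-cycle. -/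
theorem small_decomposition_even (lam v u : ℕ) (hlam : 0 < lam) (hv : 0 < v) (hu : 0 < u)
    (hle : Even lam) (hev : Even (lam * v)) (heu : Even (lam * u))
    (mt k r : ℕ) (hmt_even : Even mt) (hmt4 : 4 ≤ mt) (hmtb : mt ≤ 2 * min v u)
    (hk : k = (mt - 2) / 2)
    (hge : mt + 4 * k ≤ lam * v * u)
    (hpar : Even (lam * v * u - mt - 4 * k))
    (hr : r = (lam * v * u - mt - 4 * k) / 2) :
    ∃ Cs : List (Multiset (Sym2 (Fin v ⊕ Fin u))),
      List.Forall₂ IsCycleM (List.replicate r 2 ++ List.replicate k 4 ++ [mt]) Cs ∧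
      Cs.sum = lamK lam v u :=
  small_decomposition_even_general lam v u hlam hle mt k r hmt_even hmt4 hmtb hk hr
end
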